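/- arXiv:1509.04944 — 6 statements merged into one kernel-verified Lean document; each statement's English description precedes it below -/
import Mathlib

section
/- Let G be a graph and let x be a simplicial vertex of G (its neighborhood induces a clique). Then x is an element of every geodetic set of G. -/
/-!
Subwalks of a geodesic are geodesics, so the two neighbours of an interior vertex along a
geodesic are at distance 2: distinct and non-adjacent. A simplicial vertex can therefore lie on
a geodesic only as one of its endpoints.
-/

open SimpleGraph

/-- `S` is geodetic in `G`: every vertex lies on a shortest path (geodesic)
between two vertices of `S`. -/
def IsGeodetic {V : Type*} (G : SimpleGraph V) (S : Set V) : Prop :=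
  ∀ z : V, ∃ x ∈ S, ∃ y ∈ S, ∃ p : G.Walk x y,
    p.IsPath ∧ p.length = G.dist x y ∧ z ∈ p.support

/-- The geodetic number of `G`: minimum cardinality of a geodetic set. -/
noncomputable def geodeticNumber {V : Type*} (G : SimpleGraph V) : ℕ :=
  sInf {n | ∃ S : Set V, IsGeodetic G S ∧ S.ncard = n}

namespace SimpleGraph.Walk

variable {V : Type*} {G : SimpleGraph V} {a b : V}

lemma dist_getVert_getVert_of_length_eq_dist {p : G.Walk a b} (hp : p.length = G.dist a b)
    {i j : ℕ} (hij : i ≤ j) (hj : j ≤ p.length) :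
    G.dist (p.getVert i) (p.getVert j) = j - i := by
  have hsub : ((p.drop i).take (j - i)).IsSubwalk p :=
    ((p.drop i).isSubwalk_take _).trans (p.isSubwalk_drop i)
  have := length_eq_dist_of_subwalk hp hsub
  rw [take_length, drop_length, drop_getVert, Nat.add_sub_cancel' hij] at this
  omega

lemma eq_or_eq_of_isClique_neighborSet {p : G.Walk a b} (hp : p.length = G.dist a b) {x : V}
    (hxp : x ∈ p.support) (hx : G.IsClique (G.neighborSet x)) : x = a ∨ x = b := by
  obtain ⟨i, rfl, hi⟩ := mem_support_iff_exists_getVert.1 hxp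
  by_contra! hend
  have hi0 : i ≠ 0 := fun h => hend.1 (by rw [h, getVert_zero])
  have hilen : i ≠ p.length := fun h => hend.2 (by rw [h, getVert_length])
  have hpred : G.Adj (p.getVert i) (p.getVert (i - 1)) := by
    have := p.adj_getVert_succ (i := i - 1) (by omega)
    rw [Nat.sub_add_cancel (by omega)] at this
    exact this.symm
  have hsucc : G.Adj (p.getVert i) (p.getVert (i + 1)) := p.adj_getVert_succ (by omega)
  have hdist : G.dist (p.getVert (i - 1)) (p.getVert (i + 1)) = 2 := by
    rw [dist_getVert_getVert_of_length_eq_dist hp (by omega) (by omega)]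
    omega
  have hne : p.getVert (i - 1) ≠ p.getVert (i + 1) := fun h => by simp [h] at hdist
  have := dist_eq_one_iff_adj.2 (hx hpred hsucc hne)
  omega

end SimpleGraph.Walk

/-- A simplicial vertex belongs to every geodetic set. -/
theorem simplicial_mem_geodetic {V : Type*} (G : SimpleGraph V) (x : V)
    (hx : G.IsClique (G.neighborSet x)) (S : Set V) (hS : IsGeodetic G S) :
    x ∈ S := by
  obtain ⟨a, ha, b, hb, p, -, hlen, hxp⟩ := hS x
  rcases p.eq_or_eq_of_isClique_neighborSet hlen hxp hx with rfl | rfl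
  exacts [ha, hb]
end

section
/- Let T be a tree with diameter exactly 3. Then the geodetic number of the complement of T equals 2. -/
/-! A tree of diameter 3 with diametral path `u – c – d – v` is a double star: every vertex is
at distance at most 1 from the end of the edge `cd` it is closer to, since otherwise the path
from it to `v` (or `u`) through `cd` would be longer than 3. Hence in the complement `c` and `d`
are adjacent to no common vertex and lie at distance 3, and each vertex `z` lies on a
complement geodesic `c – v – z – d` or `c – z – u – d`. So `{c, d}` is geodetic, while a geodetic
set of a nontrivial graph has at least two vertices. -/

open SimpleGraph

section Geodetic

variable {V : Type*} {G : SimpleGraph V}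

lemma isGeodetic_univ : IsGeodetic G Set.univ :=
  fun z => ⟨z, trivial, z, trivial, .nil, .nil, by simp, by simp⟩

lemma geodeticNumber_le_ncard {S : Set V} (hS : IsGeodetic G S) : geodeticNumber G ≤ S.ncard :=
  Nat.sInf_le ⟨S, hS, rfl⟩

lemma IsGeodetic.nontrivial [Nontrivial V] {S : Set V} (hS : IsGeodetic G S) : S.Nontrivial := by
  by_contra hnt
  have hsub : ∀ z, z ∈ S := fun z => by
    obtain ⟨x, hx, y, hy, p, -, hp, hz⟩ := hS z
    obtain rfl := Set.not_nontrivial_iff.mp hnt hx hy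
    rw [dist_self, Walk.length_eq_zero_iff] at hp
    rw [hp.eq_nil, Walk.support_nil, List.mem_singleton] at hz
    rwa [hz]
  obtain ⟨a, b, hab⟩ := exists_pair_ne V
  exact hnt ⟨a, hsub a, b, hsub b, hab⟩

lemma two_le_geodeticNumber [Finite V] [Nontrivial V] : 2 ≤ geodeticNumber G := by
  refine le_csInf ⟨_, _, isGeodetic_univ, rfl⟩ ?_
  rintro n ⟨S, hS, rfl⟩
  exact Set.one_lt_ncard_iff_nontrivial.mpr hS.nontrivial

lemma isGeodetic_pair {c d : V}
    (h : ∀ z, ∃ p : G.Walk c d, p.length ≤ G.dist c d ∧ z ∈ p.support) :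
    IsGeodetic G {c, d} := fun z => by
  obtain ⟨p, hp, hz⟩ := h z
  have hlen : p.length = G.dist c d := le_antisymm hp (dist_le p)
  exact ⟨c, by simp, d, by simp, p, p.isPath_of_length_eq_dist hlen, hlen, hz⟩

lemma geodeticNumber_eq_two [Finite V] {c d : V} (hcd : c ≠ d) (h : IsGeodetic G {c, d}) :
    geodeticNumber G = 2 :=
  have : Nontrivial V := ⟨c, d, hcd⟩
  le_antisymm ((geodeticNumber_le_ncard h).trans_eq (Set.ncard_pair hcd)) two_le_geodeticNumber

end Geodetic

namespace SimpleGraph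

variable {V : Type*} {G : SimpleGraph V}

lemma exists_adj_adj_adj_of_dist_eq_three {u v : V} (h : G.dist u v = 3) :
    ∃ c d, G.Adj u c ∧ G.Adj c d ∧ G.Adj d v := by
  have hr : G.Reachable u v := Reachable.of_dist_ne_zero (by omega)
  obtain ⟨p, hp⟩ := hr.exists_walk_length_eq_dist
  refine ⟨p.getVert 1, p.getVert 2, ?_, p.adj_getVert_succ (by omega), ?_⟩
  · simpa using p.adj_getVert_succ (i := 0) (by omega)
  · have := p.adj_getVert_succ (i := 2) (by omega)
    rwa [show 2 + 1 = p.length by omega, Walk.getVert_length] at this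

lemma compl_adj_iff_two_le_dist (hG : G.Connected) {a b : V} : Gᶜ.Adj a b ↔ 2 ≤ G.dist a b := by
  rw [compl_adj]
  constructor
  · rintro ⟨hne, hna⟩
    exact hG.one_lt_dist_of_ne_of_not_adj hne hna
  · intro h
    refine ⟨fun hab => ?_, fun hab => ?_⟩
    · subst hab
      simp at h
    · rw [dist_eq_one_iff_adj.mpr hab] at h
      omega

lemma three_le_dist_compl_of_adj (hG : G.Connected) {c d : V} (hcd : G.Adj c d)
    (hstar : ∀ z, G.dist z c ≤ 1 ∨ G.dist z d ≤ 1) (hr : Gᶜ.Reachable c d) :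
    3 ≤ Gᶜ.dist c d := by
  obtain ⟨p, hp⟩ := hr.exists_walk_length_eq_dist
  have h1 : 1 < Gᶜ.dist c d :=
    hr.one_lt_dist_of_ne_of_not_adj hcd.ne fun h => ((compl_adj G c d).mp h).2 hcd
  by_contra! h2
  have hlen : p.length = 2 := by omega
  have e₁ := (compl_adj_iff_two_le_dist hG).mp (p.adj_getVert_succ (i := 0) (by omega))
  have e₂ := (compl_adj_iff_two_le_dist hG).mp (p.adj_getVert_succ (i := 1) (by omega))
  rw [Walk.getVert_zero, zero_add, dist_comm] at e₁
  rw [show 1 + 1 = p.length by omega, Walk.getVert_length] at e₂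
  rcases hstar (p.getVert 1) with h | h <;> omega

lemma IsAcyclic.eq_of_adj_of_dist_add_one_eq (hG : G.IsAcyclic) {z x y₁ y₂ : V}
    (h₁ : G.Adj y₁ x) (h₂ : G.Adj y₂ x)
    (hd₁ : G.dist z y₁ + 1 = G.dist z x) (hd₂ : G.dist z y₂ + 1 = G.dist z x) : y₁ = y₂ := by
  have hr : G.Reachable z x := Reachable.of_dist_ne_zero (by omega)
  obtain ⟨p₁, hp₁⟩ := (hr.trans h₁.symm.reachable).exists_walk_length_eq_dist
  obtain ⟨p₂, hp₂⟩ := (hr.trans h₂.symm.reachable).exists_walk_length_eq_dist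
  have hq₁ := (p₁.concat h₁).isPath_of_length_eq_dist (by rw [Walk.length_concat, hp₁, hd₁])
  have hq₂ := (p₂.concat h₂).isPath_of_length_eq_dist (by rw [Walk.length_concat, hp₂, hd₂])
  obtain ⟨rfl, -⟩ := Walk.concat_inj <|
    congrArg Subtype.val ((hG.subsingleton_path z x).elim ⟨_, hq₁⟩ ⟨_, hq₂⟩)
  rfl

lemma IsTree.dist_eq_add_two (hT : G.IsTree) {z c d v : V} (hcd : G.Adj c d) (hdv : G.Adj d v)
    (hcv : c ≠ v) (hz : G.dist z c < G.dist z d) : G.dist z v = G.dist z c + 2 := by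
  have hzd : G.dist z d = G.dist z c + 1 := by
    have := hT.dist_eq_dist_add_one_of_adj z hcd
    omega
  rcases hT.dist_eq_dist_add_one_of_adj z hdv with h | h
  · exact absurd (hT.isAcyclic.eq_of_adj_of_dist_add_one_eq hcd hdv.symm hzd.symm h.symm) hcv
  · omega

lemma IsTree.dist_le_one_of_dist_lt (hT : G.IsTree) (hd : G.diam = 3) {z c d v : V}
    (hcd : G.Adj c d) (hdv : G.Adj d v) (hcv : c ≠ v) (hz : G.dist z c < G.dist z d) :
    G.dist z c ≤ 1 := by
  have := dist_le_diam (ediam_ne_top_of_diam_ne_zero (G := G) (by omega)) (u := z) (v := v)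
  have := hT.dist_eq_add_two hcd hdv hcv hz
  omega

lemma IsTree.exists_compl_walk_of_dist_lt (hT : G.IsTree) (hd : G.diam = 3) {u c d v : V}
    (huc : G.Adj u c) (hcd : G.Adj c d) (hdv : G.Adj d v) (hud : u ≠ d) (hcv : c ≠ v) (z : V)
    (hz : G.dist z c < G.dist z d) : ∃ p : Gᶜ.Walk c d, p.length = 3 ∧ z ∈ p.support := by
  have hG := hT.connected
  have hwalk : ∀ x, G.dist x c = 1 → G.dist x c < G.dist x d →
      ∃ p : Gᶜ.Walk c d, p.length = 3 ∧ x ∈ p.support := by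
    intro x hx hlt
    have hcv₂ := hT.dist_eq_add_two hcd hdv hcv (z := c) (by simp [dist_eq_one_iff_adj.mpr hcd])
    have hxv := hT.dist_eq_add_two hcd hdv hcv hlt
    have e₁ : Gᶜ.Adj c v := (compl_adj_iff_two_le_dist hG).mpr (by omega)
    have e₂ : Gᶜ.Adj v x := (compl_adj_iff_two_le_dist hG).mpr (by rw [dist_comm]; omega)
    have e₃ : Gᶜ.Adj x d := (compl_adj_iff_two_le_dist hG).mpr (by omega)
    exact ⟨.cons e₁ (.cons e₂ (.cons e₃ .nil)), rfl, by simp⟩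
  by_cases hzc : z = c
  · have hu : G.dist u c < G.dist u d := by
      have := hT.dist_eq_dist_add_one_of_adj u hcd
      have := hG.pos_dist_of_ne hud
      rw [dist_eq_one_iff_adj.mpr huc] at *
      omega
    obtain ⟨p, hp, -⟩ := hwalk u (dist_eq_one_iff_adj.mpr huc) hu
    exact ⟨p, hp, hzc ▸ p.start_mem_support⟩
  · have := hT.dist_le_one_of_dist_lt hd hcd hdv hcv hz
    have := hG.pos_dist_of_ne hzc
    exact hwalk z (by omega) hz

lemma IsTree.isGeodetic_compl_pair (hT : G.IsTree) (hd : G.diam = 3) {u c d v : V}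
    (huc : G.Adj u c) (hcd : G.Adj c d) (hdv : G.Adj d v) (hud : u ≠ d) (hcv : c ≠ v) :
    IsGeodetic Gᶜ {c, d} := by
  have hwalk_c := hT.exists_compl_walk_of_dist_lt hd huc hcd hdv hud hcv
  have hwalk_d := hT.exists_compl_walk_of_dist_lt hd hdv.symm hcd.symm huc.symm hcv.symm hud.symm
  have hstar : ∀ z, G.dist z c ≤ 1 ∨ G.dist z d ≤ 1 := fun z => by
    rcases lt_or_gt_of_ne (hT.dist_ne_of_adj z hcd) with h | h
    · exact .inl (hT.dist_le_one_of_dist_lt hd hcd hdv hcv h)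
    · exact .inr (hT.dist_le_one_of_dist_lt hd hcd.symm huc.symm hud.symm h)
  obtain ⟨p, -, -⟩ := hwalk_c c (by simp [dist_eq_one_iff_adj.mpr hcd])
  have h3 : 3 ≤ Gᶜ.dist c d := three_le_dist_compl_of_adj hT.connected hcd hstar ⟨p⟩
  refine isGeodetic_pair fun z => ?_
  rcases lt_or_gt_of_ne (hT.dist_ne_of_adj z hcd) with h | h
  · obtain ⟨p, hp, hz⟩ := hwalk_c z h
    exact ⟨p, by omega, hz⟩
  · obtain ⟨p, hp, hz⟩ := hwalk_d z h
    exact ⟨p.reverse, by rw [Walk.length_reverse]; omega, by simpa using hz⟩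

end SimpleGraph

/-- If `T` is a tree with diameter exactly 3, then the geodetic number of its
complement is 2. -/
theorem geodeticNumber_compl_of_diam_eq_three {V : Type*} [Fintype V] (G : SimpleGraph V)
    (hT : G.IsTree) (hd : G.diam = 3) :
    geodeticNumber Gᶜ = 2 := by
  have : Nonempty V := hT.connected.nonempty
  obtain ⟨u, v, huv⟩ := G.exists_dist_eq_diam
  rw [hd] at huv
  obtain ⟨c, d, huc, hcd, hdv⟩ := exists_adj_adj_adj_of_dist_eq_three huv
  have hud : u ≠ d := by
    rintro rfl
    rw [dist_eq_one_iff_adj.mpr hdv] at huv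
    omega
  have hcv : c ≠ v := by
    rintro rfl
    rw [dist_eq_one_iff_adj.mpr huc] at huv
    omega
  exact geodeticNumber_eq_two hcd.ne (hT.isGeodetic_compl_pair hd huc hcd hdv hud hcv)
end

section
/- Let T be a tree with diameter greater than 3 that has a vertex of degree two. Then the geodetic number of the complement of T equals 3. -/
open SimpleGraph

/-! In the complement of a tree `T` of diameter greater than 3, any two vertices are at distance
at most 2: if `x y` is an edge of `T` and no vertex were non-adjacent to both, every vertex would be
within distance 1 of `x` or `y`, so `T` would have diameter at most 3.

Upper bound: if `v` has exactly the neighbours `a, b`, then `a, b` have no other common neighbour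
(a tree has no 4-cycle), so any other vertex `z` is non-adjacent in `T` to `v` and to one of `a, b`,
say `a`; as `v a` is an edge of `T`, the path `v z a` is a geodesic of the complement.

Lower bound: if a pair `{x, y}` were geodetic in the complement, every other vertex would be
adjacent in the complement, i.e. non-adjacent in `T`, to both `x` and `y`; as `T` is connected
there would be no other vertex. -/

lemma Set.exists_eq_pair_of_ncard_le_two {α : Type*} {s : Set α} (hs : s.Finite)
    (hne : s.Nonempty) (h : s.ncard ≤ 2) : ∃ x y, s = {x, y} := by
  interval_cases hcard : s.ncard
  · exact absurd hcard ((Set.ncard_pos hs).mpr hne).ne'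
  · obtain ⟨x, rfl⟩ := Set.ncard_eq_one.mp hcard
    exact ⟨x, x, by simp⟩
  · obtain ⟨x, y, -, rfl⟩ := Set.ncard_eq_two.mp hcard
    exact ⟨x, y, rfl⟩

namespace SimpleGraph

variable {V : Type*} {G : SimpleGraph V} {a b u w x y z : V}

def geodesicInterval (G : SimpleGraph V) (x y : V) : Set V :=
  {z | ∃ p : G.Walk x y, p.IsPath ∧ p.length = G.dist x y ∧ z ∈ p.support}

lemma geodesicInterval_self : G.geodesicInterval x x = {x} := by
  ext z
  constructor
  · rintro ⟨p, -, hl, hz⟩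
    rw [dist_self, Walk.length_eq_zero_iff, ← Walk.eq_nil_iff_nil] at hl
    simpa [hl] using hz
  · rintro rfl
    exact ⟨.nil, by simp⟩

lemma geodesicInterval_comm : G.geodesicInterval x y = G.geodesicInterval y x := by
  suffices ∀ x y, G.geodesicInterval x y ⊆ G.geodesicInterval y x from
    (this x y).antisymm (this y x)
  rintro x y z ⟨p, hp, hl, hz⟩
  exact ⟨p.reverse, hp.reverse, by rw [Walk.length_reverse, hl, dist_comm], by simpa using hz⟩

lemma Walk.eq_or_eq_or_adj_of_mem_support_of_length_le_two (p : G.Walk x y)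
    (hp : p.length ≤ 2) (hz : z ∈ p.support) : z = x ∨ z = y ∨ G.Adj x z ∧ G.Adj z y := by
  match p with
  | .nil => simp_all
  | .cons _ .nil =>
    simp only [Walk.support_cons, Walk.support_nil, List.mem_cons, List.not_mem_nil] at hz
    tauto
  | .cons hxm (.cons hmy .nil) =>
    simp only [Walk.support_cons, Walk.support_nil, List.mem_cons, List.not_mem_nil] at hz
    rcases hz with rfl | rfl | rfl | hz
    exacts [.inl rfl, .inr (.inr ⟨hxm, hmy⟩), .inr (.inl rfl), hz.elim]
  | .cons _ (.cons _ (.cons _ _)) => simp at hp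

lemma eq_or_eq_or_adj_of_mem_geodesicInterval (hxy : G.dist x y ≤ 2)
    (hz : z ∈ G.geodesicInterval x y) : z = x ∨ z = y ∨ G.Adj x z ∧ G.Adj z y := by
  obtain ⟨p, -, hl, hz⟩ := hz
  exact p.eq_or_eq_or_adj_of_mem_support_of_length_le_two (hl ▸ hxy) hz

lemma mem_geodesicInterval_of_adj_of_adj (hxy : x ≠ y) (hnxy : ¬G.Adj x y) (hxz : G.Adj x z)
    (hzy : G.Adj z y) : z ∈ G.geodesicInterval x y := by
  let p : G.Walk x y := .cons hxz (.cons hzy .nil)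
  have hdist : G.dist x y = 2 := by
    have hpos := p.reachable.pos_dist_of_ne hxy
    have hne : G.dist x y ≠ 1 := mt dist_eq_one_iff_adj.mp hnxy
    have hle : G.dist x y ≤ 2 := dist_le p
    omega
  refine ⟨p, ?_, by rw [hdist]; rfl, by simp [p]⟩
  simp [p, hxy, hxz.ne, hzy.ne]

lemma IsAcyclic.commonNeighbors_subsingleton (hG : G.IsAcyclic) (hab : a ≠ b) :
    (G.commonNeighbors a b).Subsingleton := by
  intro v hv z hz
  rw [mem_commonNeighbors] at hv hz
  let path (m : V) (ham : G.Adj a m) (hmb : G.Adj m b) : G.Path a b :=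
    ⟨.cons ham (.cons hmb .nil), by simp [hab, ham.ne, hmb.ne]⟩
  have := (hG.subsingleton_path a b).elim (path v hv.1 hv.2.symm) (path z hz.1 hz.2.symm)
  simpa [path] using congrArg (fun p : G.Path a b => p.1.getVert 1) this

lemma Connected.eq_or_eq_of_forall_not_adj (hG : G.Connected)
    (h : ∀ z, z ≠ x → z ≠ y → ¬G.Adj x z ∧ ¬G.Adj y z) (z : V) : z = x ∨ z = y := by
  by_contra hz
  obtain ⟨d, -, hd, hd'⟩ := (hG.preconnected x z).some.exists_boundary_dart {x, y} (by simp) hz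
  have hne : d.snd ≠ x ∧ d.snd ≠ y := by simpa [not_or] using hd'
  rcases hd with hdx | hdy
  · exact (h _ hne.1 hne.2).1 (hdx ▸ d.adj)
  · exact (h _ hne.1 hne.2).2 (hdy ▸ d.adj)

lemma Connected.exists_compl_adj_compl_adj (hG : G.Connected) (huw : 3 < G.dist u w)
    (hxy : G.Adj x y) : ∃ m, Gᶜ.Adj x m ∧ Gᶜ.Adj m y := by
  by_contra! hfar
  have hle {p q : V} (h : ¬Gᶜ.Adj p q) : G.dist p q ≤ 1 := by
    by_cases hpq : p = q
    · simp [hpq]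
    · exact (dist_eq_one_iff_adj.mpr (by simpa [compl_adj, hpq] using h)).le
  have hnear (m : V) : ∃ c, (c = x ∨ c = y) ∧ G.dist m c ≤ 1 := by
    by_cases h : Gᶜ.Adj x m
    · exact ⟨y, .inr rfl, hle (hfar m h)⟩
    · exact ⟨x, .inl rfl, hle fun h' ↦ h h'.symm⟩
  obtain ⟨c, hc, huc⟩ := hnear u
  obtain ⟨c', hc', hwc'⟩ := hnear w
  have hcc' : G.dist c c' ≤ 1 := by
    rcases hc with rfl | rfl <;> rcases hc' with rfl | rfl <;>
      simp [dist_eq_one_iff_adj.mpr, hxy, hxy.symm]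
  have : G.dist u w ≤ 3 := calc
    G.dist u w ≤ G.dist u c + (G.dist c c' + G.dist c' w) :=
      hG.dist_triangle.trans (Nat.add_le_add_left hG.dist_triangle _)
    _ ≤ 3 := by rw [dist_comm (u := c')]; omega
  omega

lemma Connected.compl_dist_le_two (hG : G.Connected) (huw : 3 < G.dist u w) (x y : V) :
    Gᶜ.dist x y ≤ 2 := by
  by_cases hxy : x = y
  · simp [hxy]
  by_cases hadj : G.Adj x y
  · obtain ⟨m, hxm, hmy⟩ := hG.exists_compl_adj_compl_adj huw hadj
    exact dist_le (.cons hxm (.cons hmy .nil))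
  · exact (dist_eq_one_iff_adj.mpr ((compl_adj G x y).mpr ⟨hxy, hadj⟩)).trans_le one_le_two

end SimpleGraph

section

variable {V : Type*} {G : SimpleGraph V} {a b u v w x y : V}

lemma isGeodetic_iff {S : Set V} :
    IsGeodetic G S ↔ ∀ z, ∃ x ∈ S, ∃ y ∈ S, z ∈ G.geodesicInterval x y :=
  Iff.rfl

lemma IsGeodetic.eq_or_eq_or_adj_of_pair (hS : IsGeodetic G {x, y}) (hdist : G.dist x y ≤ 2)
    (z : V) : z = x ∨ z = y ∨ G.Adj x z ∧ G.Adj z y := by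
  obtain ⟨x', hx', y', hy', hz⟩ := isGeodetic_iff.mp hS z
  simp only [Set.mem_insert_iff, Set.mem_singleton_iff] at hx' hy'
  rcases hx' with rfl | rfl <;> rcases hy' with rfl | rfl
  · simp_all [geodesicInterval_self]
  · exact eq_or_eq_or_adj_of_mem_geodesicInterval hdist hz
  · rw [geodesicInterval_comm] at hz
    exact eq_or_eq_or_adj_of_mem_geodesicInterval hdist hz
  · simp_all [geodesicInterval_self]

lemma isGeodetic_compl_of_neighborSet_eq_pair (hv : G.neighborSet v = {a, b})
    (hab : (G.commonNeighbors a b).Subsingleton) : IsGeodetic Gᶜ {v, a, b} := by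
  rw [isGeodetic_iff]
  intro z
  by_cases hzS : z ∈ ({v, a, b} : Set V)
  · exact ⟨z, hzS, z, hzS, by simp [geodesicInterval_self]⟩
  simp only [Set.mem_insert_iff, Set.mem_singleton_iff, not_or] at hzS
  obtain ⟨hzv, hza, hzb⟩ := hzS
  have hva : G.Adj v a := show a ∈ G.neighborSet v by simp [hv]
  have hvb : G.Adj v b := show b ∈ G.neighborSet v by simp [hv]
  have hvz : Gᶜ.Adj v z := by
    refine (compl_adj G v z).mpr ⟨Ne.symm hzv, fun h ↦ ?_⟩
    have : z ∈ G.neighborSet v := h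
    simp_all
  have hz : ¬G.Adj a z ∨ ¬G.Adj b z := by
    by_contra! h
    exact hzv <| hab (G.mem_commonNeighbors.mpr h)
      (G.mem_commonNeighbors.mpr ⟨hva.symm, hvb.symm⟩)
  have key {c : V} (hvc : G.Adj v c) (hzc : c ≠ z) (hcz : ¬G.Adj c z) :
      z ∈ Gᶜ.geodesicInterval v c :=
    mem_geodesicInterval_of_adj_of_adj hvc.ne (fun h ↦ ((compl_adj G v c).mp h).2 hvc) hvz
      ((compl_adj G z c).mpr ⟨hzc.symm, fun h ↦ hcz h.symm⟩)
  rcases hz with h | h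
  · exact ⟨v, by simp, a, by simp, key hva (Ne.symm hza) h⟩
  · exact ⟨v, by simp, b, by simp, key hvb (Ne.symm hzb) h⟩

lemma geodeticNumber_eq_of_isGeodetic {n : ℕ} {S : Set V} (hS : IsGeodetic G S)
    (hn : S.ncard = n) (hmin : ∀ T, IsGeodetic G T → n ≤ T.ncard) : geodeticNumber G = n :=
  le_antisymm (Nat.sInf_le ⟨S, hS, hn⟩) <|
    le_csInf ⟨n, S, hS, hn⟩ fun _ ⟨T, hT, hTn⟩ ↦ hTn ▸ hmin T hT

lemma SimpleGraph.Connected.forall_eq_or_eq_of_isGeodetic_compl_pair (hG : G.Connected)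
    (huw : 3 < G.dist u w) (hS : IsGeodetic Gᶜ {x, y}) (z : V) : z = x ∨ z = y := by
  refine hG.eq_or_eq_of_forall_not_adj (fun z hzx hzy ↦ ?_) z
  obtain ⟨hxz, hzy⟩ : Gᶜ.Adj x z ∧ Gᶜ.Adj z y := by
    simpa [hzx, hzy] using hS.eq_or_eq_or_adj_of_pair (hG.compl_dist_le_two huw x y) z
  exact ⟨((compl_adj G x z).mp hxz).2, fun h ↦ ((compl_adj G z y).mp hzy).2 h.symm⟩

lemma SimpleGraph.Connected.three_le_ncard_of_isGeodetic_compl [Fintype V] (hG : G.Connected)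
    (huw : 3 < G.dist u w) {S : Set V} (hS : IsGeodetic Gᶜ S) : 3 ≤ S.ncard := by
  classical
  by_contra! hcard
  obtain ⟨x, hx, -⟩ := hS u
  obtain ⟨x, y, rfl⟩ := Set.exists_eq_pair_of_ncard_le_two S.toFinite ⟨x, hx⟩ (by omega)
  have hV : Fintype.card V ≤ 2 := calc
    Fintype.card V ≤ ({x, y} : Finset V).card :=
      Finset.card_le_card fun z _ ↦ by
        simpa using hG.forall_eq_or_eq_of_isGeodetic_compl_pair huw hS z
    _ ≤ 2 := Finset.card_le_two
  obtain ⟨p, hp, hl⟩ := hG.exists_path_of_dist u w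
  have := hp.length_lt
  omega

end

/-- If `T` is a tree with diameter greater than 3 having a vertex of degree two,
then the geodetic number of its complement is 3. -/
theorem geodeticNumber_compl_of_diam_gt_three {V : Type*} [Fintype V] (G : SimpleGraph V)
    (hT : G.IsTree) (hd : 3 < G.diam) (hdeg : ∃ v : V, (G.neighborSet v).ncard = 2) :
    geodeticNumber Gᶜ = 3 := by
  have : Nonempty V := hT.connected.nonempty
  obtain ⟨u, w, huw⟩ := G.exists_dist_eq_diam
  obtain ⟨v, hv⟩ := hdeg
  obtain ⟨a, b, hab, hvab⟩ := Set.ncard_eq_two.mp hv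
  have hva : G.Adj v a := show a ∈ G.neighborSet v by simp [hvab]
  have hvb : G.Adj v b := show b ∈ G.neighborSet v by simp [hvab]
  exact geodeticNumber_eq_of_isGeodetic
    (isGeodetic_compl_of_neighborSet_eq_pair hvab (hT.isAcyclic.commonNeighbors_subsingleton hab))
    (Set.ncard_eq_three.mpr ⟨v, a, b, hva.ne, hvb.ne, hab, rfl⟩)
    fun _ ↦ hT.connected.three_le_ncard_of_isGeodetic_compl (huw ▸ hd)
end

section
/- Let G be a graph which is the join of graphs G_1 and G_2, where both G_1 and G_2 contain a pair of nonadjacent vertices. If D_1 is a nonadjacent pair in G_1 and D_2 a nonadjacent pair in G_2, then D_1 ∪ D_2 is a geodetic set of G. -/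
open SimpleGraph

/-- The join `G₁ ⊗ G₂` of two graphs: their disjoint union together with all
edges between the two vertex sets. -/
def joinGraph {V₁ V₂ : Type*} (G₁ : SimpleGraph V₁) (G₂ : SimpleGraph V₂) :
    SimpleGraph (V₁ ⊕ V₂) where
  Adj x y :=
    match x, y with
    | Sum.inl a, Sum.inl b => G₁.Adj a b
    | Sum.inr a, Sum.inr b => G₂.Adj a b
    | Sum.inl _, Sum.inr _ => True
    | Sum.inr _, Sum.inl _ => True
  symm := by
    constructor
    rintro (a | a) (b | b) h <;> simp_all only <;> exact h.symm
  loopless := by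
    constructor
    rintro (a | a) h
    · exact G₁.loopless.irrefl a h
    · exact G₂.loopless.irrefl a h

namespace SimpleGraph

variable {V : Type*} {G : SimpleGraph V} {a b z : V}

theorem dist_eq_two_of_adj_of_adj (hab : a ≠ b) (hnadj : ¬G.Adj a b) (haz : G.Adj a z)
    (hzb : G.Adj z b) : G.dist a b = 2 := by
  have hedist : G.edist a b = 2 :=
    edist_eq_two_iff.mpr ⟨hab, hnadj, z, G.mem_commonNeighbors.mpr ⟨haz, hzb.symm⟩⟩
  simp [dist, hedist]

theorem exists_geodesic_through_of_adj_of_adj (hab : a ≠ b) (hnadj : ¬G.Adj a b)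
    (haz : G.Adj a z) (hzb : G.Adj z b) :
    ∃ p : G.Walk a b, p.IsPath ∧ p.length = G.dist a b ∧ z ∈ p.support := by
  refine ⟨.cons haz (.cons hzb .nil), ?_, ?_, by simp⟩
  · simp [Walk.isPath_def, hab, haz.ne, hzb.ne]
  · simp [dist_eq_two_of_adj_of_adj hab hnadj haz hzb]

end SimpleGraph

theorem isGeodetic_of_forall_adj_of_adj {V : Type*} {G : SimpleGraph V} {S : Set V}
    (h : ∀ z, ∃ a ∈ S, ∃ b ∈ S, a ≠ b ∧ ¬G.Adj a b ∧ G.Adj a z ∧ G.Adj z b) :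
    IsGeodetic G S := fun z ↦ by
  obtain ⟨a, ha, b, hb, hab, hnadj, haz, hzb⟩ := h z
  exact ⟨a, ha, b, hb, exists_geodesic_through_of_adj_of_adj hab hnadj haz hzb⟩

section joinGraph

variable {V₁ V₂ : Type*} {G₁ : SimpleGraph V₁} {G₂ : SimpleGraph V₂}

@[simp] theorem joinGraph_adj_inl_inl {a b : V₁} :
    (joinGraph G₁ G₂).Adj (.inl a) (.inl b) ↔ G₁.Adj a b := .rfl

@[simp] theorem joinGraph_adj_inr_inr {a b : V₂} :
    (joinGraph G₁ G₂).Adj (.inr a) (.inr b) ↔ G₂.Adj a b := .rfl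

@[simp] theorem joinGraph_adj_inl_inr {a : V₁} {b : V₂} :
    (joinGraph G₁ G₂).Adj (.inl a) (.inr b) := trivial

@[simp] theorem joinGraph_adj_inr_inl {a : V₂} {b : V₁} :
    (joinGraph G₁ G₂).Adj (.inr a) (.inl b) := trivial

end joinGraph

/-- In a join of two graphs each containing a nonadjacent pair, the union of a
nonadjacent pair from each side is a geodetic set. -/
theorem join_nonadjacent_pairs_geodetic {V₁ V₂ : Type*}
    (G₁ : SimpleGraph V₁) (G₂ : SimpleGraph V₂)
    (x₁ y₁ : V₁) (hne₁ : x₁ ≠ y₁) (h₁ : ¬ G₁.Adj x₁ y₁)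
    (x₂ y₂ : V₂) (hne₂ : x₂ ≠ y₂) (h₂ : ¬ G₂.Adj x₂ y₂) :
    IsGeodetic (joinGraph G₁ G₂)
      {Sum.inl x₁, Sum.inl y₁, Sum.inr x₂, Sum.inr y₂} := by
  -- every vertex of one side is a common neighbour of the nonadjacent pair on the other side
  refine isGeodetic_of_forall_adj_of_adj fun z ↦ ?_
  rcases z with a | b
  · exact ⟨.inr x₂, by simp, .inr y₂, by simp, by simpa using hne₂, by simpa using h₂, by simp,
      by simp⟩
  · exact ⟨.inl x₁, by simp, .inl y₁, by simp, by simpa using hne₁, by simpa using h₁, by simp,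
      by simp⟩
end

section
/- Let G be a connected AT-free graph, let z be a vertex, and let x, y be nonadjacent vertices such that z lies in C_x(y) ∩ C_y(x), where C_x(y) denotes the component of G − N[x] containing y. Then x and y lie in different components of G − N[z]. -/
/-!
A walk from `x` to `y` outside `N[z]`, together with the given walks from `y` to `z` outside
`N[x]` and from `x` to `z` outside `N[y]`, would make `{x, y, z}` an asteroidal triple.
-/

open SimpleGraph

/-- There is a path from `a` to `b` in `G` all of whose vertices avoid the
closed neighborhood of `c`. -/
def ConnAvoiding {V : Type*} (G : SimpleGraph V) (c a b : V) : Prop :=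
  ∃ p : G.Walk a b, ∀ v ∈ p.support, v ≠ c ∧ ¬ G.Adj c v

/-- `{x, y, z}` is an asteroidal triple: three pairwise nonadjacent vertices such
that any two of them are joined by a path avoiding the closed neighborhood of
the third. -/
def IsAsteroidalTriple {V : Type*} (G : SimpleGraph V) (x y z : V) : Prop :=
  x ≠ y ∧ y ≠ z ∧ x ≠ z ∧ ¬ G.Adj x y ∧ ¬ G.Adj y z ∧ ¬ G.Adj x z ∧
    ConnAvoiding G z x y ∧ ConnAvoiding G x y z ∧ ConnAvoiding G y x z

/-- A graph is AT-free if it contains no asteroidal triple. -/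
def IsATFree {V : Type*} (G : SimpleGraph V) : Prop :=
  ∀ x y z : V, ¬ IsAsteroidalTriple G x y z

/-- There is a walk from `u` to `v` in `G` all of whose vertices avoid the set `A`. -/
def ReachAvoiding {V : Type*} (G : SimpleGraph V) (A : Set V) (u v : V) : Prop :=
  ∃ p : G.Walk u v, ∀ w ∈ p.support, w ∉ A

/-- The closed neighborhood of `x`. -/
def closedNbhd {V : Type*} (G : SimpleGraph V) (x : V) : Set V :=
  insert x (G.neighborSet x)

section

variable {V : Type*} {G : SimpleGraph V}

lemma not_mem_closedNbhd_iff {a b : V} : a ∉ closedNbhd G b ↔ a ≠ b ∧ ¬ G.Adj b a := by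
  simp only [closedNbhd, Set.mem_insert_iff, mem_neighborSet, not_or]

lemma mem_closedNbhd_comm {a b : V} : a ∈ closedNbhd G b ↔ b ∈ closedNbhd G a := by
  simp only [closedNbhd, Set.mem_insert_iff, mem_neighborSet, eq_comm, G.adj_comm]

lemma ReachAvoiding.left_not_mem {A : Set V} {u v : V} (h : ReachAvoiding G A u v) : u ∉ A :=
  let ⟨p, hp⟩ := h; hp u p.start_mem_support

lemma ReachAvoiding.right_not_mem {A : Set V} {u v : V} (h : ReachAvoiding G A u v) : v ∉ A :=
  let ⟨p, hp⟩ := h; hp v p.end_mem_support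

lemma reachAvoiding_closedNbhd_iff {a b c : V} :
    ReachAvoiding G (closedNbhd G c) a b ↔ ConnAvoiding G c a b := by
  simp only [ReachAvoiding, ConnAvoiding, not_mem_closedNbhd_iff]

/-- Pairwise distinctness and nonadjacency come from the endpoints: each vertex ends a walk
avoiding the closed neighbourhoods of the other two. -/
lemma isAsteroidalTriple_of_reachAvoiding {x y z : V}
    (hxy : ReachAvoiding G (closedNbhd G z) x y) (hyz : ReachAvoiding G (closedNbhd G x) y z)
    (hxz : ReachAvoiding G (closedNbhd G y) x z) : IsAsteroidalTriple G x y z := by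
  obtain ⟨hyx, hAdj_xy⟩ := not_mem_closedNbhd_iff.mp hyz.left_not_mem
  obtain ⟨hzy, hAdj_yz⟩ := not_mem_closedNbhd_iff.mp hxz.right_not_mem
  obtain ⟨hzx, hAdj_xz⟩ := not_mem_closedNbhd_iff.mp hyz.right_not_mem
  exact ⟨hyx.symm, hzy.symm, hzx.symm, hAdj_xy, hAdj_yz, hAdj_xz,
    reachAvoiding_closedNbhd_iff.mp hxy, reachAvoiding_closedNbhd_iff.mp hyz,
    reachAvoiding_closedNbhd_iff.mp hxz⟩

end

theorem between_separates_general {V : Type*} (G : SimpleGraph V)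
    (hAT : IsATFree G)
    (x y z : V)
    (hzy : ReachAvoiding G (closedNbhd G x) y z)
    (hzx : ReachAvoiding G (closedNbhd G y) x z) :
    x ∉ closedNbhd G z ∧ y ∉ closedNbhd G z ∧
      ¬ ReachAvoiding G (closedNbhd G z) x y :=
  ⟨mem_closedNbhd_comm.not.mp hzy.right_not_mem, mem_closedNbhd_comm.not.mp hzx.right_not_mem,
    fun hxy => hAT x y z (isAsteroidalTriple_of_reachAvoiding hxy hzy hzx)⟩

/-- In a connected AT-free graph, if `z` is between nonadjacent vertices `x` and
`y` (i.e. `z ∈ C_x(y) ∩ C_y(x)`, where `C_x(y)` is the component of `G − N[x]`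
containing `y`), then `x` and `y` lie in different components of `G − N[z]`. -/
theorem between_separates {V : Type*} (G : SimpleGraph V)
    (hconn : G.Connected) (hAT : IsATFree G)
    (x y z : V) (hne : x ≠ y) (hxy : ¬ G.Adj x y)
    (hzy : ReachAvoiding G (closedNbhd G x) y z)
    (hzx : ReachAvoiding G (closedNbhd G y) x z) :
    x ∉ closedNbhd G z ∧ y ∉ closedNbhd G z ∧
      ¬ ReachAvoiding G (closedNbhd G z) x y :=
  between_separates_general G hAT x y z hzy hzx
end

section
/- Let G be a permutation graph with permutation diagram, let S be a minimal separator of G realized by a scanline, and let C be a connected component of G − S. Then the neighborhoods in C of any two nonadjacent vertices of S are ordered by inclusion: for nonadjacent u, v ∈ S, either N(u) ∩ C ⊆ N(v) ∩ C or N(v) ∩ C ⊆ N(u) ∩ C. -/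
open SimpleGraph

/-- `S` separates `a` from `b` in `G`: `a, b ∉ S` and no walk from `a` to `b`
avoids `S`. -/
def SeparatesAvoiding {V : Type*} (G : SimpleGraph V) (S : Set V) (a b : V) : Prop :=
  a ∉ S ∧ b ∉ S ∧ ¬ ReachAvoiding G S a b

/-- `S` is a minimal separator of `G`: it separates some pair `a, b` and no
proper subset of `S` does. -/
def IsMinimalSeparator {V : Type*} (G : SimpleGraph V) (S : Set V) : Prop :=
  ∃ a b : V, SeparatesAvoiding G S a b ∧ ∀ S' ⊂ S, ¬ SeparatesAvoiding G S' a b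

/-- `C` is a connected component of `G − S`. -/
def IsCompAvoiding {V : Type*} (G : SimpleGraph V) (S C : Set V) : Prop :=
  C.Nonempty ∧ Disjoint C S ∧ (∀ u ∈ C, ∀ v ∈ C, ReachAvoiding G S u v) ∧
    ∀ u ∈ C, ∀ v : V, v ∉ S → ReachAvoiding G S u v → v ∈ C

/-
Every vertex off the scanline lies strictly to its left or strictly to its right, and no edge joins
the two sides, so `C` lies on one side. Segments crossing the scanline with opposite slopes cross
each other, so the nonadjacent `u, v ∈ S` cross it the same way. For a fixed slope and a fixed
side, one endpoint of every segment of that side is already ordered against that of `u`, so `u`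
meets such a segment `c` iff the other endpoint of `c` lies beyond that of `u`: the neighbourhoods
of `u` and `v` in `C` are both up-sets, or both down-sets, in one coordinate, hence nested.
-/

namespace ReachAvoiding

variable {V : Type*} {G : SimpleGraph V}

theorem mem_of_closed_under_adj {A L : Set V} {a b : V}
    (hL : ∀ x y, x ∈ L → G.Adj x y → y ∉ A → y ∈ L) (h : ReachAvoiding G A a b) (ha : a ∈ L) :
    b ∈ L := by
  obtain ⟨p, hp⟩ := h
  induction p with
  | nil => exact ha
  | cons hxy q ih =>
    simp only [Walk.support_cons, List.mem_cons, forall_eq_or_imp] at hp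
    exact ih (hL _ _ ha hxy (hp.2 _ q.start_mem_support)) hp.2

end ReachAvoiding

theorem IsCompAvoiding.subset_or_subset {V : Type*} {G : SimpleGraph V} {S C L R : Set V}
    (hC : IsCompAvoiding G S C) (hcover : ∀ w ∉ S, w ∈ L ∨ w ∈ R)
    (hLR : ∀ x ∈ L, ∀ y ∈ R, ¬ G.Adj x y) : C ⊆ L ∨ C ⊆ R := by
  obtain ⟨⟨c₀, hc₀⟩, hdisj, hconn, -⟩ := hC
  have hL : ∀ x y, x ∈ L → G.Adj x y → y ∉ S → y ∈ L := fun x y hx hxy hy =>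
    (hcover y hy).resolve_right fun hyR => hLR x hx y hyR hxy
  have hR : ∀ x y, x ∈ R → G.Adj x y → y ∉ S → y ∈ R := fun x y hx hxy hy =>
    (hcover y hy).resolve_left fun hyL => hLR y hyL x hx hxy.symm
  rcases hcover c₀ (hdisj.notMem_of_mem_left hc₀) with hc₀L | hc₀R
  · exact Or.inl fun c hc => (hconn c₀ hc₀ c hc).mem_of_closed_under_adj hL hc₀L
  · exact Or.inr fun c hc => (hconn c₀ hc₀ c hc).mem_of_closed_under_adj hR hc₀R

theorem neighborSet_inter_subset_or_subset_of_adj_iff_lt {V α : Type*} [LinearOrder α]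
    {G : SimpleGraph V} {C : Set V} (f : V → α) {u v : V}
    (hu : ∀ c ∈ C, G.Adj u c ↔ f u < f c) (hv : ∀ c ∈ C, G.Adj v c ↔ f v < f c) :
    G.neighborSet u ∩ C ⊆ G.neighborSet v ∩ C ∨ G.neighborSet v ∩ C ⊆ G.neighborSet u ∩ C := by
  rcases le_total (f u) (f v) with h | h
  · exact Or.inr fun c ⟨hvc, hc⟩ => ⟨(hu c hc).2 (h.trans_lt ((hv c hc).1 hvc)), hc⟩
  · exact Or.inl fun c ⟨huc, hc⟩ => ⟨(hv c hc).2 (h.trans_lt ((hu c hc).1 huc)), hc⟩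

def IsPermutationDiagram {V : Type*} (G : SimpleGraph V) (top bot : V → ℝ) : Prop :=
  ∀ x y : V, G.Adj x y ↔ (top x < top y ∧ bot y < bot x) ∨ (top y < top x ∧ bot x < bot y)

section Scanline

variable {V : Type*} (top bot : V → ℝ) (st sb : ℝ)

def scanLeft : Set V := {w | top w < st ∧ bot w < sb}

def scanRight : Set V := {w | st < top w ∧ sb < bot w}

variable {top bot st sb}

theorem mem_scanLeft_or_mem_scanRight (hst : ∀ v, top v ≠ st) (hsb : ∀ v, bot v ≠ sb) (w : V)
    (hw : ¬((top w < st ∧ sb < bot w) ∨ (st < top w ∧ bot w < sb))) :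
    w ∈ scanLeft top bot st sb ∨ w ∈ scanRight top bot st sb := by
  rcases (hst w).lt_or_gt with ht | ht <;> rcases (hsb w).lt_or_gt with hb | hb
  · exact Or.inl ⟨ht, hb⟩
  · exact absurd (Or.inl ⟨ht, hb⟩) hw
  · exact absurd (Or.inr ⟨ht, hb⟩) hw
  · exact Or.inr ⟨ht, hb⟩

end Scanline

namespace IsPermutationDiagram

variable {V : Type*} {G : SimpleGraph V} {top bot : V → ℝ}

theorem adj_iff_top_lt_of_bot_lt (hG : IsPermutationDiagram G top bot) {u c : V}
    (h : bot c < bot u) : G.Adj u c ↔ top u < top c := by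
  rw [hG]
  constructor
  · rintro (⟨h₁, -⟩ | ⟨-, h₂⟩)
    exacts [h₁, absurd h₂ h.not_gt]
  · exact fun h₁ => Or.inl ⟨h₁, h⟩

theorem adj_iff_bot_lt_of_top_lt (hG : IsPermutationDiagram G top bot) {u c : V}
    (h : top c < top u) : G.Adj u c ↔ bot u < bot c := by
  rw [hG]
  constructor
  · rintro (⟨h₁, -⟩ | ⟨-, h₂⟩)
    exacts [absurd h₁ h.not_gt, h₂]
  · exact fun h₂ => Or.inr ⟨h, h₂⟩

theorem adj_iff_lt_top_of_lt_bot (hG : IsPermutationDiagram G top bot) {u c : V}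
    (h : bot u < bot c) : G.Adj u c ↔ top c < top u :=
  (G.adj_comm u c).trans <| hG.adj_iff_top_lt_of_bot_lt h

theorem adj_iff_lt_bot_of_lt_top (hG : IsPermutationDiagram G top bot) {u c : V}
    (h : top u < top c) : G.Adj u c ↔ bot c < bot u :=
  (G.adj_comm u c).trans <| hG.adj_iff_bot_lt_of_top_lt h

theorem not_adj_of_mem_scanLeft_of_mem_scanRight (hG : IsPermutationDiagram G top bot)
    {st sb : ℝ} {a b : V} (ha : a ∈ scanLeft top bot st sb) (hb : b ∈ scanRight top bot st sb) :
    ¬ G.Adj a b := by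
  rw [hG.adj_iff_lt_top_of_lt_bot (ha.2.trans hb.2)]
  exact (ha.1.trans hb.1).not_gt

end IsPermutationDiagram

theorem permutation_separator_neighborhoods_nested_general {V : Type*}
    (G : SimpleGraph V) (top bot : V → ℝ)
    (hrep : ∀ x y : V, G.Adj x y ↔
      (top x < top y ∧ bot y < bot x) ∨ (top y < top x ∧ bot x < bot y))
    (S : Set V)
    (st sb : ℝ) (hst : ∀ v : V, top v ≠ st) (hsb : ∀ v : V, bot v ≠ sb)
    (hscan : S = {v : V | (top v < st ∧ sb < bot v) ∨ (st < top v ∧ bot v < sb)})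
    (C : Set V) (hC : IsCompAvoiding G S C) :
    ∀ u ∈ S, ∀ v ∈ S, ¬ G.Adj u v →
      (G.neighborSet u ∩ C ⊆ G.neighborSet v ∩ C ∨
       G.neighborSet v ∩ C ⊆ G.neighborSet u ∩ C) := by
  subst hscan
  intro u hu v hv huv
  have hG : IsPermutationDiagram G top bot := hrep
  have hside := hC.subset_or_subset (mem_scanLeft_or_mem_scanRight hst hsb)
    fun a ha b hb => hG.not_adj_of_mem_scanLeft_of_mem_scanRight ha hb
  rcases hu with hu | hu <;> rcases hv with hv | hv
  · rcases hside with hCL | hCR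
    · exact neighborSet_inter_subset_or_subset_of_adj_iff_lt top
        (fun c hc => hG.adj_iff_top_lt_of_bot_lt ((hCL hc).2.trans hu.2))
        (fun c hc => hG.adj_iff_top_lt_of_bot_lt ((hCL hc).2.trans hv.2))
    · exact neighborSet_inter_subset_or_subset_of_adj_iff_lt (OrderDual.toDual ∘ bot)
        (fun c hc => hG.adj_iff_lt_bot_of_lt_top (hu.1.trans (hCR hc).1))
        (fun c hc => hG.adj_iff_lt_bot_of_lt_top (hv.1.trans (hCR hc).1))
  · exact absurd ((hG u v).2 (Or.inl ⟨hu.1.trans hv.1, hv.2.trans hu.2⟩)) huv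
  · exact absurd ((hG u v).2 (Or.inr ⟨hv.1.trans hu.1, hu.2.trans hv.2⟩)) huv
  · rcases hside with hCL | hCR
    · exact neighborSet_inter_subset_or_subset_of_adj_iff_lt bot
        (fun c hc => hG.adj_iff_bot_lt_of_top_lt ((hCL hc).1.trans hu.1))
        (fun c hc => hG.adj_iff_bot_lt_of_top_lt ((hCL hc).1.trans hv.1))
    · exact neighborSet_inter_subset_or_subset_of_adj_iff_lt (OrderDual.toDual ∘ top)
        (fun c hc => hG.adj_iff_lt_top_of_lt_bot (hu.2.trans (hCR hc).2))
        (fun c hc => hG.adj_iff_lt_top_of_lt_bot (hv.2.trans (hCR hc).2))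

/-- In a permutation graph with diagram given by endpoint maps `top`, `bot`, let
`S` be a minimal separator realized by a scanline `(st, sb)` and let `C` be a
component of `G − S`.  Then the neighborhoods in `C` of any two nonadjacent
vertices of `S` are ordered by inclusion. -/
theorem permutation_separator_neighborhoods_nested {V : Type*}
    (G : SimpleGraph V) (top bot : V → ℝ)
    (htop : Function.Injective top) (hbot : Function.Injective bot)
    (hrep : ∀ x y : V, G.Adj x y ↔
      (top x < top y ∧ bot y < bot x) ∨ (top y < top x ∧ bot x < bot y))
    (S : Set V) (hmin : IsMinimalSeparator G S)
    (st sb : ℝ) (hst : ∀ v : V, top v ≠ st) (hsb : ∀ v : V, bot v ≠ sb)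
    (hscan : S = {v : V | (top v < st ∧ sb < bot v) ∨ (st < top v ∧ bot v < sb)})
    (C : Set V) (hC : IsCompAvoiding G S C) :
    ∀ u ∈ S, ∀ v ∈ S, ¬ G.Adj u v →
      (G.neighborSet u ∩ C ⊆ G.neighborSet v ∩ C ∨
       G.neighborSet v ∩ C ⊆ G.neighborSet u ∩ C) :=
  permutation_separator_neighborhoods_nested_general G top bot hrep S st sb hst hsb hscan C hC
end
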